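/- arXiv:2406.02276 — 2 statements merged into one kernel-verified Lean document; each statement's English description precedes it below -/
import Mathlib

section
/- Let D and D' be two closed discs in the plane, neither contained in the other. If points A, B lie in D but not in D', and points A', B' lie in D' but not in D, then the closed segments [A,B] and [A',B'] are disjoint. -/
open Metric Set

noncomputable section

abbrev Plane := EuclideanSpace ℝ (Fin 2)

/-- If `A, B` lie in the closed disc `D` but not in `D'`, and `A', B'` lie in `D'`
but not in `D`, where neither disc is contained in the other, then the closed
segments `[A,B]` and `[A',B']` are disjoint. -/
theorem stmt1 (O O' : Plane) (r r' : ℝ) (hr : 0 < r) (hr' : 0 < r')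
    (hDD' : ¬ closedBall O r ⊆ closedBall O' r')
    (hD'D : ¬ closedBall O' r' ⊆ closedBall O r)
    (A B A' B' : Plane)
    (hA : A ∈ closedBall O r \ closedBall O' r')
    (hB : B ∈ closedBall O r \ closedBall O' r')
    (hA' : A' ∈ closedBall O' r' \ closedBall O r)
    (hB' : B' ∈ closedBall O' r' \ closedBall O r) :
    Disjoint (segment ℝ A B) (segment ℝ A' B') := by
  set v : Plane := O' - O with hv
  set c : ℝ := ‖O‖^2 - ‖O'‖^2 + r'^2 - r^2 with hc
  set g : Plane → ℝ := fun x => 2 * inner ℝ x v + c with hg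
  have expand : ∀ x : Plane, g x = (‖x - O‖^2 - r^2) - (‖x - O'‖^2 - r'^2) := by
    intro x
    have e1 : ‖x - O‖^2 = ‖x‖^2 - 2*(inner ℝ x O : ℝ) + ‖O‖^2 := by
      rw [@norm_sub_sq_real]
    have e2 : ‖x - O'‖^2 = ‖x‖^2 - 2*(inner ℝ x O' : ℝ) + ‖O'‖^2 := by
      rw [@norm_sub_sq_real]
    have ev : (inner ℝ x v : ℝ) = inner ℝ x O' - inner ℝ x O := by
      rw [hv, inner_sub_right]
    simp only [hg, hc]
    rw [ev, e1, e2]; ring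
  have key : ∀ x : Plane, x ∈ closedBall O r \ closedBall O' r' → g x < 0 := by
    rintro x ⟨hx, hx'⟩
    rw [mem_closedBall, dist_eq_norm] at hx
    rw [mem_closedBall, dist_eq_norm, not_le] at hx'
    have h1 : ‖x - O‖^2 ≤ r^2 := by nlinarith [norm_nonneg (x - O)]
    have h2 : r'^2 < ‖x - O'‖^2 := by nlinarith [norm_nonneg (x - O'), hr'.le]
    rw [expand x]; linarith
  have key' : ∀ x : Plane, x ∈ closedBall O' r' \ closedBall O r → 0 < g x := by
    rintro x ⟨hx, hx'⟩
    rw [mem_closedBall, dist_eq_norm] at hx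
    rw [mem_closedBall, dist_eq_norm, not_le] at hx'
    have h1 : ‖x - O'‖^2 ≤ r'^2 := by nlinarith [norm_nonneg (x - O')]
    have h2 : r^2 < ‖x - O‖^2 := by nlinarith [norm_nonneg (x - O), hr.le]
    rw [expand x]; linarith
  have gaffine : ∀ (a b : ℝ) (x y : Plane), a + b = 1 →
      g (a • x + b • y) = a * g x + b * g y := by
    intro a b x y hab
    simp only [hg]
    rw [inner_add_left, real_inner_smul_left, real_inner_smul_left]
    nlinarith [hab]
  rw [Set.disjoint_left]
  rintro P ⟨a, b, ha, hb, hab, rfl⟩ ⟨a', b', ha', hb', hab', heq⟩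
  have hgA := key A hA
  have hgB := key B hB
  have hgA' := key' A' hA'
  have hgB' := key' B' hB'
  have h1 : g (a • A + b • B) < 0 := by
    rw [gaffine a b A B hab]
    rcases ha.eq_or_lt with h | h
    · have hb1 : b = 1 := by linarith
      rw [← h, hb1]; linarith
    · nlinarith [mul_pos h (neg_pos.mpr hgA), mul_nonneg hb (neg_pos.mpr hgB).le]
  have h2 : 0 < g (a' • A' + b' • B') := by
    rw [gaffine a' b' A' B' hab']
    rcases ha'.eq_or_lt with h | h
    · have hb1 : b' = 1 := by linarith
      rw [← h, hb1]; linarith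
    · nlinarith [mul_pos h hgA', mul_nonneg hb' hgB'.le]
  rw [heq] at h2
  linarith
end
end

section
/- Let F be a finite family of pairwise intersecting circles in the plane and let G be the geometric graph whose vertices are the centers of the circles, with an edge between two centers whenever the corresponding circles create a lune in the arrangement. Then no two edges of G cross: any two edges (as closed segments) with no shared endpoint are disjoint. -/
open Metric Set

open scoped RealInnerProductSpace

set_option maxHeartbeats 1000000

noncomputable section

/-- Two circles properly cross (intersect in exactly two points). -/
def Crossing (O : Plane) (r : ℝ) (O' : Plane) (r' : ℝ) : Prop :=
  |r - r'| < dist O O' ∧ dist O O' < r + r'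

/-- Circles `i` and `j` of the family create a lune: one of `Dᵢ \ Dⱼ`, `Dⱼ \ Dᵢ` is a
face of the arrangement, i.e. its interior is disjoint from all other circles. -/
def CreatesLune (n : ℕ) (O : Fin n → Plane) (rad : Fin n → ℝ) (i j : Fin n) : Prop :=
  (∀ k : Fin n, k ≠ i → k ≠ j → Disjoint (sphere (O k) (rad k))
      (interior (closedBall (O i) (rad i) \ closedBall (O j) (rad j)))) ∨
  (∀ k : Fin n, k ≠ i → k ≠ j → Disjoint (sphere (O k) (rad k))
      (interior (closedBall (O j) (rad j) \ closedBall (O i) (rad i))))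

/-! ### Auxiliary lemmas -/

/-- Power-of-a-point expansion identity. -/
lemma two_mul_inner_eq (p q o₁ o₂ : Plane) :
    2 * ⟪q - p, o₂ - o₁⟫ =
      dist q o₁ ^ 2 - dist q o₂ ^ 2 - dist p o₁ ^ 2 + dist p o₂ ^ 2 := by
  have e : ∀ x y : Plane, dist x y ^ 2 = ⟪x, x⟫ - 2 * ⟪x, y⟫ + ⟪y, y⟫ := by
    intro x y
    rw [dist_eq_norm, ← real_inner_self_eq_norm_sq, inner_sub_left, inner_sub_right,
      inner_sub_right, real_inner_comm y x]
    ring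
  rw [e, e, e, e, inner_sub_left, inner_sub_right, inner_sub_right]
  ring

/-- Norm of a combination of two orthonormal vectors. -/
lemma norm_ortho_comb {u v : Plane} (hu : ‖u‖ = 1) (hv : ‖v‖ = 1)
    (huv : ⟪u, v⟫ = 0) (a b : ℝ) : ‖a • u + b • v‖ ^ 2 = a ^ 2 + b ^ 2 := by
  have huv' : ⟪v, u⟫ = 0 := by rw [real_inner_comm]; exact huv
  rw [← real_inner_self_eq_norm_sq]
  simp only [inner_add_left, inner_add_right, real_inner_smul_left, real_inner_smul_right,
    huv, huv']
  rw [real_inner_self_eq_norm_sq, real_inner_self_eq_norm_sq, hu, hv]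
  ring

/-- From strict crossing data, a point on both circles is not on the line of centers:
its normal component is nonzero. -/
lemma cross_core {d ra rm c₀ : ℝ} (hd : 0 < d) (h1 : |ra - rm| < d) (h2 : d < ra + rm)
    (hc : 2 * d * c₀ = d ^ 2 + ra ^ 2 - rm ^ 2) : c₀ ^ 2 < ra ^ 2 := by
  obtain ⟨ha, hb⟩ := abs_lt.mp h1
  have h3 : (2 * d * c₀) ^ 2 = (d ^ 2 + ra ^ 2 - rm ^ 2) ^ 2 := by rw [hc]
  have h4 : d - ra - rm < 0 := by linarith
  have h5 : (0:ℝ) < d - ra + rm := by linarith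
  have h6 : (0:ℝ) < d + ra - rm := by linarith
  have h7 : (0:ℝ) < d + ra + rm := by linarith
  have key : 4 * d ^ 2 * (c₀ ^ 2 - ra ^ 2) =
      (d - ra - rm) * ((d - ra + rm) * ((d + ra - rm) * (d + ra + rm))) := by
    linear_combination h3
  have hneg : (d - ra - rm) * ((d - ra + rm) * ((d + ra - rm) * (d + ra + rm))) < 0 :=
    mul_neg_of_neg_of_pos h4 (mul_pos h5 (mul_pos h6 h7))
  nlinarith [key, hneg, pow_pos hd 2]

/-- Existence of an intersection point of two properly crossing circles in the plane. -/
lemma exists_inter (A B : Plane) (ra rb : ℝ) (h0a : 0 < ra)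
    (hlt : |ra - rb| < dist A B) (hgt : dist A B < ra + rb) :
    ∃ p : Plane, dist p A = ra ∧ dist p B = rb := by
  set d : ℝ := dist A B with hd_def
  have hd : 0 < d := lt_of_le_of_lt (abs_nonneg _) hlt
  set u : Plane := d⁻¹ • (B - A) with hu_def
  have hBA : ‖B - A‖ = d := by rw [← dist_eq_norm, dist_comm]
  have hu : ‖u‖ = 1 := by
    rw [hu_def, norm_smul, hBA, norm_inv, Real.norm_eq_abs, abs_of_pos hd,
      inv_mul_cancel₀ hd.ne']
  -- explicit normal vector
  set v : Plane := (WithLp.equiv 2 (Fin 2 → ℝ)).symm ![-(u 1), u 0] with hv_def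
  have hv0 : v 0 = -(u 1) := by
    rw [hv_def]
    simp [WithLp.equiv_symm_apply]
  have hv1 : v 1 = u 0 := by
    rw [hv_def]
    simp [WithLp.equiv_symm_apply]
  have hsum_u : u 0 ^ 2 + u 1 ^ 2 = 1 := by
    have := real_inner_self_eq_norm_sq u
    rw [hu, PiLp.inner_apply] at this
    simpa [PiLp.inner_apply, RCLike.inner_apply, Fin.sum_univ_two, sq] using this
  have huv : ⟪u, v⟫ = 0 := by
    simp [PiLp.inner_apply, RCLike.inner_apply, Fin.sum_univ_two, hv0, hv1]
    ring
  have hv : ‖v‖ = 1 := by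
    have h2 : ‖v‖ ^ 2 = 1 := by
      rw [← real_inner_self_eq_norm_sq, PiLp.inner_apply]
      simp [PiLp.inner_apply, RCLike.inner_apply, Fin.sum_univ_two, hv0, hv1]
      nlinarith [hsum_u]
    nlinarith [norm_nonneg v]
  set α : ℝ := (d ^ 2 + ra ^ 2 - rb ^ 2) / (2 * d) with hα_def
  have hαc : 2 * d * α = d ^ 2 + ra ^ 2 - rb ^ 2 := by
    rw [hα_def]
    field_simp
  have hα2 : α ^ 2 < ra ^ 2 := cross_core hd hlt hgt hαc
  set β : ℝ := Real.sqrt (ra ^ 2 - α ^ 2) with hβ_def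
  have hβ2 : β ^ 2 = ra ^ 2 - α ^ 2 := Real.sq_sqrt (by linarith)
  refine ⟨A + α • u + β • v, ?_, ?_⟩
  · have h1 : A + α • u + β • v - A = α • u + β • v := by abel
    have h2 : ‖α • u + β • v‖ ^ 2 = ra ^ 2 := by
      rw [norm_ortho_comb hu hv huv]; linarith
    rw [dist_eq_norm, h1, ← Real.sqrt_sq (norm_nonneg _), h2, Real.sqrt_sq h0a.le]
  · have hB : B = A + d • u := by
      rw [hu_def, smul_smul, mul_inv_cancel₀ hd.ne', one_smul]
      abel
    have h1 : A + α • u + β • v - B = (α - d) • u + β • v := by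
      rw [hB, sub_smul]; abel
    have hrb : 0 ≤ rb := by
      obtain ⟨ha', hb'⟩ := abs_lt.mp hlt
      linarith
    have h2 : ‖(α - d) • u + β • v‖ ^ 2 = rb ^ 2 := by
      rw [norm_ortho_comb hu hv huv]
      linear_combination hβ2 - hαc
    rw [dist_eq_norm, h1, ← Real.sqrt_sq (norm_nonneg _), h2, Real.sqrt_sq hrb]

/-- Perturbation of an intersection point of two crossing circles: the intersection
point depends continuously on the radius of the first circle. -/
lemma sphere_pert (A M : Plane) (ra rm : ℝ) (h0a : 0 < ra)
    (hlt : |ra - rm| < dist A M) (hgt : dist A M < ra + rm)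
    (p : Plane) (hpA : dist p A = ra) (hpM : dist p M = rm) :
    ∃ z : ℝ → Plane, ContinuousAt z ra ∧ z ra = p ∧
      ∀ᶠ s in nhds ra, dist (z s) A = s ∧ dist (z s) M = rm := by
  set d : ℝ := dist A M with hd_def
  have hd : 0 < d := lt_of_le_of_lt (abs_nonneg _) hlt
  set u : Plane := d⁻¹ • (M - A) with hu_def
  have hMA : ‖M - A‖ = d := by rw [← dist_eq_norm, dist_comm]
  have hu : ‖u‖ = 1 := by
    rw [hu_def, norm_smul, hMA, norm_inv, Real.norm_eq_abs, abs_of_pos hd,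
      inv_mul_cancel₀ hd.ne']
  have hM : M = A + d • u := by
    rw [hu_def, smul_smul, mul_inv_cancel₀ hd.ne', one_smul]
    abel
  set c₀ : ℝ := ⟪p - A, u⟫ with hc₀_def
  have hpA' : ‖p - A‖ = ra := by rw [← dist_eq_norm]; exact hpA
  have hc₀ : 2 * d * c₀ = d ^ 2 + ra ^ 2 - rm ^ 2 := by
    have h1 : ‖(p - A) - d • u‖ ^ 2 = ra ^ 2 - 2 * d * c₀ + d ^ 2 := by
      rw [norm_sub_sq_real, real_inner_smul_right, norm_smul, Real.norm_eq_abs,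
        abs_of_pos hd, hu, hpA']
      ring
    have h2 : (p - A) - d • u = p - M := by rw [hM]; abel
    rw [h2, ← dist_eq_norm, hpM] at h1
    nlinarith [h1]
  set n₀ : Plane := (p - A) - c₀ • u with hn₀_def
  have hn₀sq : ‖n₀‖ ^ 2 = ra ^ 2 - c₀ ^ 2 := by
    rw [hn₀_def, norm_sub_sq_real, real_inner_smul_right, norm_smul, Real.norm_eq_abs,
      hu, hpA', ← hc₀_def, mul_one, sq_abs]
    ring
  have hc₀2 : c₀ ^ 2 < ra ^ 2 := cross_core hd hlt hgt hc₀
  have hn₀pos : 0 < ‖n₀‖ := by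
    rcases (norm_nonneg n₀).lt_or_eq with h | h
    · exact h
    · exfalso; nlinarith [hn₀sq]
  set v : Plane := ‖n₀‖⁻¹ • n₀ with hv_def
  have hv : ‖v‖ = 1 := by
    rw [hv_def, norm_smul, norm_inv, Real.norm_eq_abs, abs_of_pos hn₀pos,
      inv_mul_cancel₀ hn₀pos.ne']
  have huu : ⟪u, u⟫ = 1 := by
    rw [real_inner_self_eq_norm_sq, hu]; norm_num
  have hun₀ : ⟪u, n₀⟫ = 0 := by
    rw [hn₀_def, inner_sub_right, real_inner_smul_right, huu, real_inner_comm, ← hc₀_def]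
    ring
  have huv : ⟪u, v⟫ = 0 := by
    rw [hv_def, real_inner_smul_right, hun₀, mul_zero]
  have hrm : 0 ≤ rm := by
    obtain ⟨ha', hb'⟩ := abs_lt.mp hlt
    linarith
  let α : ℝ → ℝ := fun s => (d ^ 2 + s ^ 2 - rm ^ 2) / (2 * d)
  let β : ℝ → ℝ := fun s => Real.sqrt (s ^ 2 - α s ^ 2)
  let z : ℝ → Plane := fun s => A + α s • u + β s • v
  have hαs : ∀ s, 2 * d * α s = d ^ 2 + s ^ 2 - rm ^ 2 := by
    intro s
    show 2 * d * ((d ^ 2 + s ^ 2 - rm ^ 2) / (2 * d)) = _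
    field_simp
  have h2d : (2 * d) ≠ 0 := by positivity
  have hαra : α ra = c₀ := mul_left_cancel₀ h2d ((hαs ra).trans hc₀.symm)
  have hβra : β ra = ‖n₀‖ := by
    show Real.sqrt (ra ^ 2 - α ra ^ 2) = ‖n₀‖
    rw [hαra, ← hn₀sq]
    exact Real.sqrt_sq (norm_nonneg _)
  have hvn : ‖n₀‖ • v = n₀ := by
    rw [hv_def, smul_smul, mul_inv_cancel₀ hn₀pos.ne', one_smul]
  have hzra : z ra = p := by
    show A + α ra • u + β ra • v = p
    rw [hαra, hβra, hvn, hn₀_def]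
    abel
  have hαcont : Continuous α :=
    ((continuous_const.add (continuous_pow 2)).sub continuous_const).div_const _
  have hβcont : Continuous β :=
    Real.continuous_sqrt.comp ((continuous_pow 2).sub (hαcont.pow 2))
  have hzcont : ContinuousAt z ra := by
    show ContinuousAt (fun s => A + α s • u + β s • v) ra
    exact (((continuous_const : Continuous fun _ : ℝ => A).add
      (hαcont.smul (continuous_const : Continuous fun _ : ℝ => u))).add
      (hβcont.smul (continuous_const : Continuous fun _ : ℝ => v))).continuousAt
  refine ⟨z, hzcont, hzra, ?_⟩
  have hF : Continuous (fun s => s ^ 2 - α s ^ 2) := (continuous_pow 2).sub (hαcont.pow 2)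
  have hFpos : 0 < ra ^ 2 - α ra ^ 2 := by rw [hαra]; linarith
  have hev1 : ∀ᶠ s in nhds ra, 0 < s ^ 2 - α s ^ 2 :=
    hF.continuousAt.eventually (eventually_gt_nhds hFpos)
  have hev2 : ∀ᶠ s in nhds ra, 0 < s := eventually_gt_nhds h0a
  filter_upwards [hev1, hev2] with s hs1 hs2
  have hβs : β s ^ 2 = s ^ 2 - α s ^ 2 := Real.sq_sqrt hs1.le
  constructor
  · have h1 : z s - A = α s • u + β s • v := by
      show A + α s • u + β s • v - A = _
      abel
    have h2 : ‖α s • u + β s • v‖ ^ 2 = s ^ 2 := by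
      rw [norm_ortho_comb hu hv huv]; linarith
    rw [dist_eq_norm, h1, ← Real.sqrt_sq (norm_nonneg _), h2, Real.sqrt_sq hs2.le]
  · have h1 : z s - M = (α s - d) • u + β s • v := by
      show A + α s • u + β s • v - M = _
      rw [hM, sub_smul]
      abel
    have h2 : ‖(α s - d) • u + β s • v‖ ^ 2 = rm ^ 2 := by
      rw [norm_ortho_comb hu hv huv]
      linear_combination hβs - hαs s
    rw [dist_eq_norm, h1, ← Real.sqrt_sq (norm_nonneg _), h2, Real.sqrt_sq hrm]

/-- If the open lune `ball O₁ r₁ \ closedBall O₂ r₂` misses the circle around `Om`,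
then no point of circle `O₁` on circle `Om` can be strictly outside `closedBall O₂ r₂`. -/
lemma face_push_inside (O₁ O₂ Om : Plane) (r₁ r₂ rm : ℝ) (h0 : 0 < r₁)
    (hlt : |r₁ - rm| < dist O₁ Om) (hgt : dist O₁ Om < r₁ + rm)
    (face : ∀ z : Plane, dist z Om = rm → dist z O₁ < r₁ → r₂ < dist z O₂ → False)
    (p : Plane) (hp1 : dist p O₁ = r₁) (hpm : dist p Om = rm) :
    ¬ (r₂ < dist p O₂) := by
  intro hfar
  obtain ⟨z, hzc, hzra, hzev⟩ := sphere_pert O₁ Om r₁ rm h0 hlt hgt p hp1 hpm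
  have hcont : ContinuousAt (fun s => dist (z s) O₂) r₁ := hzc.dist continuousAt_const
  have hval : r₂ < dist (z r₁) O₂ := by rw [hzra]; exact hfar
  have hev2 : ∀ᶠ s in nhds r₁, r₂ < dist (z s) O₂ :=
    hcont.eventually (eventually_gt_nhds hval)
  have hall : ∀ᶠ s in nhds r₁, (dist (z s) O₁ = s ∧ dist (z s) Om = rm) ∧
      r₂ < dist (z s) O₂ := hzev.and hev2
  obtain ⟨s, hs_lt, ⟨hsA, hsM⟩, hsB⟩ := hall.exists_lt
  exact face (z s) hsM (by rw [hsA]; exact hs_lt) hsB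

/-- If the open lune `ball O₁ r₁ \ closedBall O₂ r₂` misses the circle around `Om`,
then no point of circle `O₂` on circle `Om` can be strictly inside `ball O₁ r₁`. -/
lemma face_push_outside (O₁ O₂ Om : Plane) (r₁ r₂ rm : ℝ) (h0 : 0 < r₂)
    (hlt : |r₂ - rm| < dist O₂ Om) (hgt : dist O₂ Om < r₂ + rm)
    (face : ∀ z : Plane, dist z Om = rm → dist z O₁ < r₁ → r₂ < dist z O₂ → False)
    (p : Plane) (hp2 : dist p O₂ = r₂) (hpm : dist p Om = rm) :
    ¬ (dist p O₁ < r₁) := by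
  intro hnear
  obtain ⟨z, hzc, hzra, hzev⟩ := sphere_pert O₂ Om r₂ rm h0 hlt hgt p hp2 hpm
  have hcont : ContinuousAt (fun s => dist (z s) O₁) r₂ := hzc.dist continuousAt_const
  have hval : dist (z r₂) O₁ < r₁ := by rw [hzra]; exact hnear
  have hev2 : ∀ᶠ s in nhds r₂, dist (z s) O₁ < r₁ :=
    hcont.eventually (eventually_lt_nhds hval)
  have hall : ∀ᶠ s in nhds r₂, (dist (z s) O₂ = s ∧ dist (z s) Om = rm) ∧
      dist (z s) O₁ < r₁ := hzev.and hev2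
  obtain ⟨s, hs_gt, ⟨hsA, hsM⟩, hsB⟩ := hall.exists_gt
  exact face (z s) hsM hsB (by rw [hsA]; exact hs_gt)

lemma convex_pos {a b X Y : ℝ} (ha : 0 ≤ a) (hb : 0 ≤ b) (hab : a + b = 1)
    (hX : 0 < X) (hY : 0 < Y) : 0 < a * X + b * Y := by
  rcases ha.eq_or_lt with h | h
  · have hb1 : b = 1 := by linarith
    rw [← h, hb1]
    simpa using hY
  · have h1 : 0 < a * X := mul_pos h hX
    have h2 : 0 ≤ b * Y := mul_nonneg hb hY.le
    linarith

/-- Core geometric lemma: two lune edges cannot cross. -/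
lemma core_noncross (Oi Oj Ok Ol : Plane) (ri rj rk rl : ℝ)
    (h0i : 0 < ri) (h0j : 0 < rj) (h0k : 0 < rk) (h0l : 0 < rl)
    (cross_il : |ri - rl| < dist Oi Ol ∧ dist Oi Ol < ri + rl)
    (cross_jk : |rj - rk| < dist Oj Ok ∧ dist Oj Ok < rj + rk)
    (face₁k : ∀ z : Plane, dist z Ok = rk → dist z Oi < ri → rj < dist z Oj → False)
    (face₁l : ∀ z : Plane, dist z Ol = rl → dist z Oi < ri → rj < dist z Oj → False)
    (face₂i : ∀ z : Plane, dist z Oi = ri → dist z Ok < rk → rl < dist z Ol → False)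
    (face₂j : ∀ z : Plane, dist z Oj = rj → dist z Ok < rk → rl < dist z Ol → False)
    (ns_Pj : ∀ p : Plane, dist p Oi = ri → dist p Ol = rl → dist p Oj ≠ rj)
    (ns_Pk : ∀ p : Plane, dist p Oi = ri → dist p Ol = rl → dist p Ok ≠ rk)
    (ns_Qi : ∀ p : Plane, dist p Oj = rj → dist p Ok = rk → dist p Oi ≠ ri)
    (ns_Ql : ∀ p : Plane, dist p Oj = rj → dist p Ok = rk → dist p Ol ≠ rl) :
    Disjoint (segment ℝ Oi Oj) (segment ℝ Ok Ol) := by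
  by_contra hnd
  obtain ⟨x, hx1, hx2⟩ := Set.not_disjoint_iff.mp hnd
  obtain ⟨a, b, ha, hb, hab, hxab⟩ := hx1
  obtain ⟨c, e, hc, he, hce, hxce⟩ := hx2
  -- the two special intersection points
  obtain ⟨P, hPi, hPl⟩ := exists_inter Oi Ol ri rl h0i cross_il.1 cross_il.2
  obtain ⟨Q, hQj, hQk⟩ := exists_inter Oj Ok rj rk h0j cross_jk.1 cross_jk.2
  -- the four strict facts
  have hPj : dist P Oj < rj := by
    have h1 := face_push_inside Oi Oj Ol ri rj rl h0i cross_il.1 cross_il.2 face₁l P hPi hPl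
    have h2 := ns_Pj P hPi hPl
    rcases lt_trichotomy (dist P Oj) rj with h | h | h
    · exact h
    · exact absurd h h2
    · exact absurd h h1
  have hPk : rk < dist P Ok := by
    have hlt' : |rl - ri| < dist Ol Oi := by rw [abs_sub_comm, dist_comm]; exact cross_il.1
    have hgt' : dist Ol Oi < rl + ri := by rw [dist_comm]; linarith [cross_il.2]
    have h1 := face_push_outside Ok Ol Oi rk rl ri h0l hlt' hgt' face₂i P hPl hPi
    have h2 := ns_Pk P hPi hPl
    rcases lt_trichotomy (dist P Ok) rk with h | h | h
    · exact absurd h h1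
    · exact absurd h h2
    · exact h
  have hQi : ri < dist Q Oi := by
    have h1 := face_push_outside Oi Oj Ok ri rj rk h0j cross_jk.1 cross_jk.2 face₁k Q hQj hQk
    have h2 := ns_Qi Q hQj hQk
    rcases lt_trichotomy (dist Q Oi) ri with h | h | h
    · exact absurd h h1
    · exact absurd h h2
    · exact h
  have hQl : dist Q Ol < rl := by
    have hlt' : |rk - rj| < dist Ok Oj := by rw [abs_sub_comm, dist_comm]; exact cross_jk.1
    have hgt' : dist Ok Oj < rk + rj := by rw [dist_comm]; linarith [cross_jk.2]
    have h1 := face_push_inside Ok Ol Oj rk rl rj h0k hlt' hgt' face₂j Q hQk hQj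
    have h2 := ns_Ql Q hQj hQk
    rcases lt_trichotomy (dist Q Ol) rl with h | h | h
    · exact h
    · exact absurd h h2
    · exact absurd h h1
  -- the four inner product inequalities
  set D : Plane := Q - P with hD_def
  have dnn : ∀ y z : Plane, 0 ≤ dist y z := fun y z => dist_nonneg
  have I1 : 0 < ⟪D, Ok - Oi⟫ := by
    have h := two_mul_inner_eq P Q Oi Ok
    rw [← hD_def] at h
    nlinarith [h, dnn Q Oi, dnn P Ok, hPi, hPk, hQk, hQi, h0i, h0k]
  have I2 : 0 < ⟪D, Ol - Oi⟫ := by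
    have h := two_mul_inner_eq P Q Oi Ol
    rw [← hD_def] at h
    nlinarith [h, dnn Q Oi, dnn Q Ol, hPi, hPl, hQi, hQl, h0i, h0l]
  have I3 : 0 < ⟪D, Ok - Oj⟫ := by
    have h := two_mul_inner_eq P Q Oj Ok
    rw [← hD_def] at h
    nlinarith [h, dnn P Oj, dnn P Ok, hQj, hQk, hPj, hPk, h0j, h0k]
  have I4 : 0 < ⟪D, Ol - Oj⟫ := by
    have h := two_mul_inner_eq P Q Oj Ol
    rw [← hD_def] at h
    nlinarith [h, dnn P Oj, dnn Q Ol, hQj, hPl, hPj, hQl, h0j, h0l]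
  -- convex combinations
  have hvi : x - Oi = c • (Ok - Oi) + e • (Ol - Oi) := by
    have : x - Oi = c • Ok + e • Ol - (c + e) • Oi := by
      rw [hce, one_smul, hxce]
    rw [this]
    module
  have hvj : x - Oj = c • (Ok - Oj) + e • (Ol - Oj) := by
    have : x - Oj = c • Ok + e • Ol - (c + e) • Oj := by
      rw [hce, one_smul, hxce]
    rw [this]
    module
  have h1 : ⟪D, x - Oi⟫ = c * ⟪D, Ok - Oi⟫ + e * ⟪D, Ol - Oi⟫ := by
    rw [hvi, inner_add_right, real_inner_smul_right, real_inner_smul_right]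
  have h2 : ⟪D, x - Oj⟫ = c * ⟪D, Ok - Oj⟫ + e * ⟪D, Ol - Oj⟫ := by
    rw [hvj, inner_add_right, real_inner_smul_right, real_inner_smul_right]
  have hzero : a • (x - Oi) + b • (x - Oj) = 0 := by
    have : a • (x - Oi) + b • (x - Oj) = (a + b) • x - (a • Oi + b • Oj) := by
      module
    rw [this, hab, one_smul, hxab, sub_self]
  have h3 : a * ⟪D, x - Oi⟫ + b * ⟪D, x - Oj⟫ = 0 := by
    rw [← real_inner_smul_right, ← real_inner_smul_right, ← inner_add_right, hzero,
      inner_zero_right]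
  have hp1 : 0 < ⟪D, x - Oi⟫ := by
    rw [h1]; exact convex_pos hc he hce I1 I2
  have hp2 : 0 < ⟪D, x - Oj⟫ := by
    rw [h2]; exact convex_pos hc he hce I3 I4
  have := convex_pos ha hb hab hp1 hp2
  linarith [h3]

/-- In the geometric graph on the centers of a finite family of pairwise intersecting
circles, whose edges join centers of pairs of circles creating a lune, no two edges
cross: any two lune edges with no shared endpoint are disjoint segments. -/
theorem stmt11 (n : ℕ) (O : Fin n → Plane) (rad : Fin n → ℝ)
    (hpos : ∀ i, 0 < rad i)
    (hcross : ∀ i j, i ≠ j → Crossing (O i) (rad i) (O j) (rad j))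
    (hsimple : ∀ p : Plane, ∀ i j k : Fin n, i ≠ j → i ≠ k → j ≠ k →
      ¬ (p ∈ sphere (O i) (rad i) ∧ p ∈ sphere (O j) (rad j) ∧ p ∈ sphere (O k) (rad k)))
    (i j k l : Fin n)
    (hdist : i ≠ j ∧ i ≠ k ∧ i ≠ l ∧ j ≠ k ∧ j ≠ l ∧ k ≠ l)
    (hlune₁ : CreatesLune n O rad i j) (hlune₂ : CreatesLune n O rad k l) :
    Disjoint (segment ℝ (O i) (O j)) (segment ℝ (O k) (O l)) := by
  obtain ⟨hij, hik, hil, hjk, hjl, hkl⟩ := hdist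
  -- convert a lune branch into a "face" condition
  have mkface : ∀ a b m : Fin n, m ≠ a → m ≠ b →
      (Disjoint (sphere (O m) (rad m))
        (interior (closedBall (O a) (rad a) \ closedBall (O b) (rad b)))) →
      ∀ z : Plane, dist z (O m) = rad m → dist z (O a) < rad a →
        rad b < dist z (O b) → False := by
    intro a b m _ _ hdisj z hzm hza hzb
    have hzs : z ∈ sphere (O m) (rad m) := by
      rw [mem_sphere]; exact hzm
    have hsub : ball (O a) (rad a) \ closedBall (O b) (rad b) ⊆
        closedBall (O a) (rad a) \ closedBall (O b) (rad b) :=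
      diff_subset_diff_left ball_subset_closedBall
    have hopen : IsOpen (ball (O a) (rad a) \ closedBall (O b) (rad b)) :=
      isOpen_ball.sdiff Metric.isClosed_closedBall
    have hzint : z ∈ interior (closedBall (O a) (rad a) \ closedBall (O b) (rad b)) :=
      interior_maximal hsub hopen ⟨mem_ball.mpr hza, fun hmem => by
        rw [mem_closedBall] at hmem; linarith⟩
    exact Set.disjoint_left.mp hdisj hzs hzint
  -- convert hsimple into a "not on third sphere" condition
  have mknosphere : ∀ a b m : Fin n, a ≠ b → a ≠ m → b ≠ m →
      ∀ p : Plane, dist p (O a) = rad a → dist p (O b) = rad b →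
        dist p (O m) ≠ rad m := by
    intro a b m hab ham hbm p hpa hpb hpm
    exact hsimple p a b m hab ham hbm
      ⟨mem_sphere.mpr hpa, mem_sphere.mpr hpb, mem_sphere.mpr hpm⟩
  -- symmetrized core application
  have main : ∀ a b c' d' : Fin n, a ≠ b → a ≠ c' → a ≠ d' → b ≠ c' → b ≠ d' → c' ≠ d' →
      (∀ m : Fin n, m ≠ a → m ≠ b → Disjoint (sphere (O m) (rad m))
        (interior (closedBall (O a) (rad a) \ closedBall (O b) (rad b)))) →
      (∀ m : Fin n, m ≠ c' → m ≠ d' → Disjoint (sphere (O m) (rad m))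
        (interior (closedBall (O c') (rad c') \ closedBall (O d') (rad d')))) →
      Disjoint (segment ℝ (O a) (O b)) (segment ℝ (O c') (O d')) := by
    intro a b c' d' hab hac had hbc hbd hcd hl₁ hl₂
    apply core_noncross (O a) (O b) (O c') (O d') (rad a) (rad b) (rad c') (rad d')
      (hpos a) (hpos b) (hpos c') (hpos d')
      ⟨(hcross a d' had).1, (hcross a d' had).2⟩
      ⟨(hcross b c' hbc).1, (hcross b c' hbc).2⟩
    · exact mkface a b c' hac.symm hbc.symm (hl₁ c' hac.symm hbc.symm)
    · exact mkface a b d' had.symm hbd.symm (hl₁ d' had.symm hbd.symm)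
    · exact mkface c' d' a hac had (hl₂ a hac had)
    · exact mkface c' d' b hbc hbd (hl₂ b hbc hbd)
    · exact fun p h1 h2 => mknosphere a d' b had hab hbd.symm p h1 h2
    · exact fun p h1 h2 => mknosphere a d' c' had hac hcd.symm p h1 h2
    · exact fun p h1 h2 => mknosphere b c' a hbc hab.symm hac.symm p h1 h2
    · exact fun p h1 h2 => mknosphere b c' d' hbc hbd hcd p h1 h2
  rcases hlune₁ with h₁ | h₁ <;> rcases hlune₂ with h₂ | h₂
  · exact main i j k l hij hik hil hjk hjl hkl h₁ h₂
  · rw [segment_symm ℝ (O k) (O l)]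
    exact main i j l k hij hil hik hjl hjk hkl.symm h₁ (fun m h1 h2 => h₂ m h2 h1)
  · rw [segment_symm ℝ (O i) (O j)]
    exact main j i k l hij.symm hjk hjl hik hil hkl (fun m h1 h2 => h₁ m h2 h1) h₂
  · rw [segment_symm ℝ (O i) (O j), segment_symm ℝ (O k) (O l)]
    exact main j i l k hij.symm hjl hjk hil hik hkl.symm (fun m h1 h2 => h₁ m h2 h1) (fun m h1 h2 => h₂ m h2 h1)
end
end
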